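/- arXiv:1208.6374 — 3 statements merged into one kernel-verified Lean document; each statement's English description precedes it below -/
import Mathlib

section
/- Let Ω ⊂ ℝ^N be an open set of finite Lebesgue measure, let u : Ω → [0,∞) be a nonnegative measurable function, and let 1 < p < ∞ with |||u|||_{M^p(Ω)} < ∞. Then ‖u‖_{L^1(Ω)} ≤ (p/(p−1)) · |||u|||_{M^1(Ω)} · [1 + log( (|||u|||_{M^p(Ω)} / |||u|||_{M^1(Ω)}) · 𝓛^N(Ω)^{1−1/p} )]. -/
/-!
By the layer-cake formula, `‖u‖₁ = ∫₀^∞ μ{|u| > t} dt`. Writing `A`, `B` for the `M¹` and `Mᵖ`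
quasinorms and `V = μ(Ω)`, the distribution function is bounded by `V`, by `A / t` and by
`Bᵖ t⁻ᵖ`. Integrating the first bound up to `A / V`, the second up to `(Bᵖ / A)^{1/(p-1)}` and the
third beyond gives `A`, the logarithmic term and `A / (p - 1)`. The weak Hölder inequality
`A ≤ B V^{1-1/p}` makes the two splitting points ordered.
-/

open MeasureTheory Set Metric Filter Topology ENNReal
open scoped FourierTransform RealInnerProductSpace

noncomputable section

/-- Euclidean space `ℝ^N`. -/
abbrev Euc (N : ℕ) : Type := EuclideanSpace ℝ (Fin N)

/-- The weak Lebesgue `M^p` pseudonorm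
`|||u|||_{M^p(μ)} = (sup_{λ>0} λ^p μ{|u|>λ})^{1/p}`. -/
def MpNorm {α : Type*} [MeasurableSpace α] (μ : Measure α) (p : ℝ) (u : α → ℝ) : ℝ≥0∞ :=
  (⨆ (t : ℝ) (_ : 0 < t), ENNReal.ofReal t ^ p * μ {x | t < |u x|}) ^ (1 / p)

/-- The weak `M^1` pseudonorm, for `ℝ≥0∞`-valued functions. -/
def M1NormE {α : Type*} [MeasurableSpace α] (μ : Measure α) (u : α → ℝ≥0∞) : ℝ≥0∞ :=
  ⨆ (t : ℝ) (_ : 0 < t), ENNReal.ofReal t * μ {x | ENNReal.ofReal t < u x}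

lemma setLIntegral_Ioc_le_of_le_div {f : ℝ → ℝ≥0∞} {a s t : ℝ} (ha : 0 ≤ a) (hs : 0 < s)
    (hst : s ≤ t) (hf : ∀ r ∈ Ioc s t, f r ≤ ENNReal.ofReal (a / r)) :
    ∫⁻ r in Ioc s t, f r ≤ ENNReal.ofReal (a * Real.log (t / s)) := by
  have hint : IntegrableOn (fun r : ℝ => a / r) (Ioc s t) :=
    (continuousOn_const.div continuousOn_id fun r hr => (hs.trans_le hr.1).ne').integrableOn_Icc
      |>.mono_set Ioc_subset_Icc_self
  have hnonneg : 0 ≤ᵐ[volume.restrict (Ioc s t)] fun r : ℝ => a / r :=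
    ae_restrict_of_forall_mem measurableSet_Ioc fun r hr => div_nonneg ha (hs.trans hr.1).le
  calc ∫⁻ r in Ioc s t, f r
      ≤ ∫⁻ r in Ioc s t, ENNReal.ofReal (a / r) := setLIntegral_mono (by fun_prop) hf
    _ = ENNReal.ofReal (∫ r in Ioc s t, a / r) :=
      (ofReal_integral_eq_lintegral_ofReal hint hnonneg).symm
    _ = ENNReal.ofReal (a * Real.log (t / s)) := by
      simp_rw [div_eq_mul_inv a, ← intervalIntegral.integral_of_le hst,
        intervalIntegral.integral_const_mul, integral_inv_of_pos hs (hs.trans_le hst)]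

lemma setLIntegral_Ioi_le_of_le_rpow {f : ℝ → ℝ≥0∞} {c p t : ℝ} (hc : 0 ≤ c) (hp : 1 < p)
    (ht : 0 < t) (hf : ∀ r ∈ Ioi t, f r ≤ ENNReal.ofReal (c * r ^ (-p))) :
    ∫⁻ r in Ioi t, f r ≤ ENNReal.ofReal (c * t ^ (1 - p) / (p - 1)) := by
  have hint : IntegrableOn (fun r : ℝ => c * r ^ (-p)) (Ioi t) :=
    (integrableOn_Ioi_rpow_of_lt (by linarith) ht).const_mul c
  have hnonneg : 0 ≤ᵐ[volume.restrict (Ioi t)] fun r : ℝ => c * r ^ (-p) :=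
    ae_restrict_of_forall_mem measurableSet_Ioi fun r hr =>
      mul_nonneg hc (Real.rpow_nonneg (ht.trans hr).le _)
  calc ∫⁻ r in Ioi t, f r
      ≤ ∫⁻ r in Ioi t, ENNReal.ofReal (c * r ^ (-p)) := setLIntegral_mono (by fun_prop) hf
    _ = ENNReal.ofReal (∫ r in Ioi t, c * r ^ (-p)) :=
      (ofReal_integral_eq_lintegral_ofReal hint hnonneg).symm
    _ = ENNReal.ofReal (c * t ^ (1 - p) / (p - 1)) := by
      rw [integral_const_mul, integral_Ioi_rpow_of_lt (by linarith) ht]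
      congr 1
      rw [neg_add_eq_sub, ← neg_sub p 1, div_neg, neg_div, neg_neg, mul_div_assoc]

lemma lintegral_Ioi_le_add_of_le_const_of_le_div_of_le_rpow {f : ℝ → ℝ≥0∞} {a c v p s t : ℝ}
    (ha : 0 ≤ a) (hc : 0 ≤ c) (hv : 0 ≤ v) (hp : 1 < p) (hs : 0 < s) (hst : s ≤ t)
    (hf_const : ∀ r ∈ Ioc 0 s, f r ≤ ENNReal.ofReal v)
    (hf_div : ∀ r ∈ Ioc s t, f r ≤ ENNReal.ofReal (a / r))
    (hf_rpow : ∀ r ∈ Ioi t, f r ≤ ENNReal.ofReal (c * r ^ (-p))) :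
    ∫⁻ r in Ioi 0, f r ≤ ENNReal.ofReal (v * s) + ENNReal.ofReal (a * Real.log (t / s)) +
      ENNReal.ofReal (c * t ^ (1 - p) / (p - 1)) := by
  have h_low : ∫⁻ r in Ioc 0 s, f r ≤ ENNReal.ofReal (v * s) :=
    calc ∫⁻ r in Ioc 0 s, f r ≤ ∫⁻ _ in Ioc 0 s, ENNReal.ofReal v :=
          setLIntegral_mono measurable_const hf_const
      _ = ENNReal.ofReal (v * s) := by
        rw [setLIntegral_const, Real.volume_Ioc, sub_zero, ENNReal.ofReal_mul hv]
  calc ∫⁻ r in Ioi 0, f r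
      = ∫⁻ r in (Ioc 0 s ∪ Ioc s t) ∪ Ioi t, f r := by
        rw [Ioc_union_Ioc_eq_Ioc hs.le hst, Ioc_union_Ioi_eq_Ioi (hs.trans_le hst).le]
    _ ≤ (∫⁻ r in Ioc 0 s, f r) + (∫⁻ r in Ioc s t, f r) + ∫⁻ r in Ioi t, f r :=
        (lintegral_union_le _ _ _).trans (add_le_add (lintegral_union_le _ _ _) le_rfl)
    _ ≤ _ := add_le_add (add_le_add h_low (setLIntegral_Ioc_le_of_le_div ha hs hst hf_div))
        (setLIntegral_Ioi_le_of_le_rpow hc hp (hs.trans_le hst) hf_rpow)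

theorem lintegral_Ioi_le_of_le_const_of_le_div_of_le_rpow {f : ℝ → ℝ≥0∞} {a b v p : ℝ}
    (hp : 1 < p) (ha : 0 < a) (hv : 0 < v) (hab : a ≤ b * v ^ (1 - 1 / p))
    (hf_const : ∀ t, 0 < t → f t ≤ ENNReal.ofReal v)
    (hf_div : ∀ t, 0 < t → f t ≤ ENNReal.ofReal (a / t))
    (hf_rpow : ∀ t, 0 < t → f t ≤ ENNReal.ofReal (b ^ p * t ^ (-p))) :
    ∫⁻ t in Ioi 0, f t ≤
      ENNReal.ofReal (p / (p - 1) * a * (1 + Real.log (b / a * v ^ (1 - 1 / p)))) := by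
  have hb : 0 < b := pos_of_mul_pos_left (ha.trans_le hab) (by positivity)
  have hp1 : 0 < p - 1 := by linarith
  -- `s` is where the bound `v` meets `a / t`, and `t₁` where `a / t` meets `b ^ p * t ^ (-p)`.
  set s := a / v with hs_def
  set t₁ := (b ^ p / a) ^ (1 / (p - 1)) with ht₁_def
  have hs : 0 < s := by positivity
  have hlog : Real.log (t₁ / s) = p / (p - 1) * Real.log (b / a * v ^ (1 - 1 / p)) := by
    rw [Real.log_div (by positivity) hs.ne', Real.log_mul (by positivity) (by positivity),
      Real.log_div hb.ne' ha.ne', Real.log_rpow hv, Real.log_rpow (by positivity),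
      Real.log_div (by positivity) ha.ne', Real.log_rpow hb, Real.log_div ha.ne' hv.ne']
    field_simp
    ring
  have hlog_nonneg : 0 ≤ Real.log (t₁ / s) := by
    rw [hlog]
    refine mul_nonneg (by positivity) (Real.log_nonneg ?_)
    rw [div_mul_eq_mul_div, le_div_iff₀ ha, one_mul]
    exact hab
  have hst₁ : s ≤ t₁ := by
    rwa [Real.log_nonneg_iff (by positivity), one_le_div hs] at hlog_nonneg
  have ht₁_rpow : t₁ ^ (1 - p) = a / b ^ p := by
    rw [ht₁_def, ← Real.rpow_mul (by positivity),
      show 1 / (p - 1) * (1 - p) = -1 by field_simp; ring, Real.rpow_neg_one, inv_div]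
  refine (lintegral_Ioi_le_add_of_le_const_of_le_div_of_le_rpow ha.le (by positivity) hv.le hp
    hs hst₁ (fun t ht => hf_const t ht.1) (fun t ht => hf_div t (hs.trans ht.1))
    (fun t ht => hf_rpow t ((hs.trans_le hst₁).trans ht))).trans_eq ?_
  have h_mid_nonneg : 0 ≤ a * Real.log (t₁ / s) := mul_nonneg ha.le hlog_nonneg
  rw [← ENNReal.ofReal_add (by positivity) h_mid_nonneg,
    ← ENNReal.ofReal_add (by positivity) (by positivity), hlog, ht₁_rpow, hs_def]
  congr 1
  field_simp
  ring

section WeakNorm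

variable {α : Type*} [MeasurableSpace α] {μ : Measure α} {u : α → ℝ} {p : ℝ}

lemma ofReal_rpow_mul_measure_le_mpNorm_rpow (hp : 0 < p) {t : ℝ} (ht : 0 < t) :
    ENNReal.ofReal t ^ p * μ {x | t < |u x|} ≤ MpNorm μ p u ^ p := by
  rw [MpNorm, ← ENNReal.rpow_mul, one_div_mul_cancel hp.ne', ENNReal.rpow_one]
  exact le_iSup₂ (f := fun (t : ℝ) (_ : 0 < t) => ENNReal.ofReal t ^ p * μ {x | t < |u x|}) t ht

lemma measure_lt_abs_le_mpNorm (hp : 0 < p) (hu : MpNorm μ p u ≠ ⊤) {t : ℝ} (ht : 0 < t) :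
    μ {x | t < |u x|} ≤ ENNReal.ofReal ((MpNorm μ p u).toReal ^ p * t ^ (-p)) := by
  rw [ENNReal.ofReal_mul (by positivity), ← ENNReal.ofReal_rpow_of_nonneg toReal_nonneg hp.le,
    ofReal_toReal hu, ← ENNReal.ofReal_rpow_of_pos ht, ENNReal.rpow_neg, ← div_eq_mul_inv,
    ENNReal.le_div_iff_mul_le (by simp [ht, hp]) (by simp [hp.le]), mul_comm]
  exact ofReal_rpow_mul_measure_le_mpNorm_rpow hp ht

lemma mpNorm_one_le_mpNorm_mul_measure_univ_rpow (hp : 1 ≤ p) :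
    MpNorm μ 1 u ≤ MpNorm μ p u * μ univ ^ (1 - 1 / p) := by
  have hp₀ : 0 < p := one_pos.trans_le hp
  have hq : 0 ≤ 1 - 1 / p := sub_nonneg.2 ((div_le_one hp₀).2 hp)
  simp only [MpNorm, div_one, ENNReal.rpow_one]
  refine iSup₂_le fun t ht => ?_
  set m := μ {x | t < |u x|}
  calc ENNReal.ofReal t * m
      = (ENNReal.ofReal t ^ p * m) ^ (1 / p) * m ^ (1 - 1 / p) := by
        rw [ENNReal.mul_rpow_of_nonneg _ _ (by positivity), ← ENNReal.rpow_mul,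
          mul_one_div_cancel hp₀.ne', ENNReal.rpow_one, mul_assoc,
          ← ENNReal.rpow_add_of_nonneg _ _ (by positivity) hq, add_sub_cancel, ENNReal.rpow_one]
    _ ≤ (MpNorm μ p u ^ p) ^ (1 / p) * μ univ ^ (1 - 1 / p) := by
        gcongr
        exacts [ofReal_rpow_mul_measure_le_mpNorm_rpow hp₀ ht, measure_mono (subset_univ _)]
    _ = MpNorm μ p u * μ univ ^ (1 - 1 / p) := by
        rw [← ENNReal.rpow_mul, mul_one_div_cancel hp₀.ne', ENNReal.rpow_one, MpNorm]

end WeakNorm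

theorem eLpNorm_one_le_of_mpNorm_lt_top {α : Type*} [MeasurableSpace α] (μ : Measure α)
    [IsFiniteMeasure μ] {u : α → ℝ} (hu : Measurable u) {p : ℝ} (hp : 1 < p)
    (hMp : MpNorm μ p u < ⊤) :
    eLpNorm u 1 μ ≤
      ENNReal.ofReal ((p / (p - 1)) * (MpNorm μ 1 u).toReal *
        (1 + Real.log ((MpNorm μ p u).toReal / (MpNorm μ 1 u).toReal *
            (μ univ).toReal ^ (1 - 1 / p)))) := by
  have h_layer : eLpNorm u 1 μ = ∫⁻ t in Ioi 0, μ {x | t < |u x|} := by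
    simp_rw [eLpNorm_one_eq_lintegral_enorm, Real.enorm_eq_ofReal_abs]
    exact lintegral_eq_lintegral_meas_lt μ (ae_of_all _ fun x => abs_nonneg _)
      hu.abs.aemeasurable
  have h_interp := mpNorm_one_le_mpNorm_mul_measure_univ_rpow (μ := μ) (u := u) hp.le
  have hq : 0 < 1 - 1 / p := sub_pos.2 ((div_lt_one (by linarith)).2 hp)
  have hBV : MpNorm μ p u * μ univ ^ (1 - 1 / p) ≠ ⊤ :=
    mul_ne_top hMp.ne (ENNReal.rpow_ne_top_of_nonneg hq.le (measure_ne_top μ univ))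
  have hA : MpNorm μ 1 u ≠ ⊤ := ne_top_of_le_ne_top hBV h_interp
  have h_one : ∀ t, 0 < t → μ {x | t < |u x|} ≤ ENNReal.ofReal ((MpNorm μ 1 u).toReal / t) :=
    fun t ht => by simpa [Real.rpow_neg_one, div_eq_mul_inv] using
      measure_lt_abs_le_mpNorm one_pos hA ht
  rw [h_layer]
  rcases eq_or_ne (MpNorm μ 1 u) 0 with hA0 | hA0
  · calc ∫⁻ t in Ioi 0, μ {x | t < |u x|} ≤ ∫⁻ _ in Ioi (0 : ℝ), 0 :=
          setLIntegral_mono measurable_const fun t ht => by simpa [hA0] using h_one t ht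
      _ ≤ _ := by simp
  have hV0 : μ univ ≠ 0 := fun hV => hA0 <| nonpos_iff_eq_zero.1 <|
    h_interp.trans_eq (by rw [hV, ENNReal.zero_rpow_of_pos hq, mul_zero])
  refine lintegral_Ioi_le_of_le_const_of_le_div_of_le_rpow hp (toReal_pos hA0 hA)
    (toReal_pos hV0 (measure_ne_top μ univ)) ?_ (fun t _ => ?_) h_one
    (fun t ht => measure_lt_abs_le_mpNorm (by linarith) hMp.ne ht)
  · simpa only [toReal_mul, toReal_rpow] using ENNReal.toReal_mono hBV h_interp
  · rw [ofReal_toReal (measure_ne_top μ univ)]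
    exact measure_mono (subset_univ _)

theorem statement0_general {N : ℕ} (Ω : Set (Euc N)) (hΩfin : volume Ω < ⊤)
    (u : Euc N → ℝ) (hu : Measurable u)
    (p : ℝ) (hp : 1 < p) (hMp : MpNorm (volume.restrict Ω) p u < ⊤) :
    eLpNorm u 1 (volume.restrict Ω) ≤
      ENNReal.ofReal ((p / (p - 1)) * (MpNorm (volume.restrict Ω) 1 u).toReal *
        (1 + Real.log ((MpNorm (volume.restrict Ω) p u).toReal /
              (MpNorm (volume.restrict Ω) 1 u).toReal *
            (volume Ω).toReal ^ (1 - 1 / p)))) := by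
  have : IsFiniteMeasure (volume.restrict Ω) := ⟨by rwa [Measure.restrict_apply_univ]⟩
  simpa only [Measure.restrict_apply_univ] using
    eLpNorm_one_le_of_mpNorm_lt_top (volume.restrict Ω) hu hp hMp

/-- Interpolation between `M^1` and `M^p`, `1 < p < ∞`:
if `Ω ⊆ ℝ^N` is open with finite measure and `u : Ω → [0,∞)` is measurable with
`|||u|||_{M^p(Ω)} < ∞`, then
`‖u‖_{L^1(Ω)} ≤ (p/(p-1)) |||u|||_{M^1(Ω)} [1 + log(|||u|||_{M^p(Ω)}/|||u|||_{M^1(Ω)} · 𝓛(Ω)^{1-1/p})]`. -/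
theorem statement0 {N : ℕ} (Ω : Set (Euc N)) (hΩopen : IsOpen Ω) (hΩfin : volume Ω < ⊤)
    (u : Euc N → ℝ) (hu : Measurable u) (hpos : ∀ x, 0 ≤ u x)
    (p : ℝ) (hp : 1 < p) (hMp : MpNorm (volume.restrict Ω) p u < ⊤) :
    eLpNorm u 1 (volume.restrict Ω) ≤
      ENNReal.ofReal ((p / (p - 1)) * (MpNorm (volume.restrict Ω) 1 u).toReal *
        (1 + Real.log ((MpNorm (volume.restrict Ω) p u).toReal /
              (MpNorm (volume.restrict Ω) 1 u).toReal *
            (volume Ω).toReal ^ (1 - 1 / p)))) :=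
  statement0_general Ω hΩfin u hu p hp hMp
end
end

section
/- Let Ω ⊂ ℝ^N be an open set of finite Lebesgue measure and let u : Ω → [0,∞) be a nonnegative measurable function with u ∈ L^∞(Ω). Then ‖u‖_{L^1(Ω)} ≤ |||u|||_{M^1(Ω)} · [1 + log( (‖u‖_{L^∞(Ω)} / |||u|||_{M^1(Ω)}) · 𝓛^N(Ω) )]. -/
/-!
By the layer-cake formula, `‖u‖₁ = ∫₀^∞ μ{|u| > t} dt`. Write `M = |||u|||_{M¹}`,
`L = ‖u‖_∞` and `V = μ(Ω)`. The distribution function is bounded by `V` everywhere,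
by `M / t` by definition of the weak norm, and vanishes for `t > L`. Splitting the
integral at `a = M / V` gives `V a + ∫_a^L M / t dt = M (1 + log (L V / M))`.
-/

open MeasureTheory Set Metric Filter Topology ENNReal
open scoped FourierTransform RealInnerProductSpace

noncomputable section

theorem lintegral_Ioc_le_mul_log {g : ℝ → ℝ≥0∞} {M a b : ℝ} (hM : 0 ≤ M) (ha : 0 < a)
    (hab : a ≤ b) (hg : ∀ t ∈ Ioc a b, g t ≤ ENNReal.ofReal (M / t)) :
    ∫⁻ t in Ioc a b, g t ≤ ENNReal.ofReal (M * Real.log (b / a)) := by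
  have hint : IntegrableOn (fun t : ℝ => M / t) (Ioc a b) :=
    (ContinuousOn.integrableOn_compact isCompact_Icc
      (continuousOn_const.div continuousOn_id fun t ht => (ha.trans_le ht.1).ne')).mono_set
      Ioc_subset_Icc_self
  calc ∫⁻ t in Ioc a b, g t ≤ ∫⁻ t in Ioc a b, ENNReal.ofReal (M / t) :=
        setLIntegral_mono' measurableSet_Ioc hg
    _ = ENNReal.ofReal (∫ t in Ioc a b, M / t) := by
        rw [ofReal_integral_eq_lintegral_ofReal hint]
        filter_upwards [ae_restrict_mem measurableSet_Ioc] with t ht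
        exact div_nonneg hM (ha.trans ht.1).le
    _ = ENNReal.ofReal (M * Real.log (b / a)) := by
        simp_rw [← intervalIntegral.integral_of_le hab, div_eq_mul_inv M,
          intervalIntegral.integral_const_mul, integral_inv_of_pos ha (ha.trans_le hab)]

theorem lintegral_Ioi_zero_le_mul_one_add_log {g : ℝ → ℝ≥0∞} {M L V : ℝ} (hM : 0 ≤ M)
    (hV : 0 ≤ V) (hMLV : M ≤ L * V) (hg_le : ∀ t, g t ≤ ENNReal.ofReal V)
    (hg_div : ∀ t > 0, g t ≤ ENNReal.ofReal (M / t)) (hg_zero : ∀ t > L, g t = 0) :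
    ∫⁻ t in Ioi 0, g t ≤ ENNReal.ofReal (M * (1 + Real.log (L / M * V))) := by
  rcases hM.eq_or_lt with rfl | hM
  · have hg0 : ∫⁻ t in Ioi 0, g t = 0 := by
      rw [setLIntegral_congr_fun measurableSet_Ioi fun t ht => by simpa using hg_div t ht,
        lintegral_zero]
    simp [hg0]
  have hV : 0 < V := hV.lt_of_ne (by rintro rfl; linarith)
  set a := M / V
  have ha : 0 < a := div_pos hM hV
  have haL : a ≤ L := (div_le_iff₀ hV).mpr hMLV
  have h_low : ∫⁻ t in Ioc 0 a, g t ≤ ENNReal.ofReal M :=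
    calc ∫⁻ t in Ioc 0 a, g t ≤ ∫⁻ _ in Ioc 0 a, ENNReal.ofReal V :=
          setLIntegral_mono' measurableSet_Ioc fun t _ => hg_le t
      _ = ENNReal.ofReal M := by
          rw [setLIntegral_const, Real.volume_Ioc, sub_zero, ← ENNReal.ofReal_mul hV.le,
            mul_div_cancel₀ _ hV.ne']
  have h_mid : ∫⁻ t in Ioc a L, g t ≤ ENNReal.ofReal (M * Real.log (L / a)) :=
    lintegral_Ioc_le_mul_log hM.le ha haL fun t ht => hg_div t (ha.trans ht.1)
  have h_high : ∫⁻ t in Ioi L, g t = 0 := by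
    rw [setLIntegral_congr_fun measurableSet_Ioi hg_zero, lintegral_zero]
  have hlog : L / a = L / M * V := by rw [div_div_eq_mul_div, div_mul_eq_mul_div]
  have hlog_nonneg : 0 ≤ M * Real.log (L / a) :=
    mul_nonneg hM.le (Real.log_nonneg ((one_le_div ha).mpr haL))
  rw [← Ioc_union_Ioi_eq_Ioi ha.le, lintegral_union measurableSet_Ioi Ioc_disjoint_Ioi_same,
    ← Ioc_union_Ioi_eq_Ioi haL, lintegral_union measurableSet_Ioi Ioc_disjoint_Ioi_same, h_high,
    add_zero, mul_one_add, ← hlog, ENNReal.ofReal_add hM.le hlog_nonneg]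
  exact add_le_add h_low h_mid

section WeakNorm

variable {α : Type*} [MeasurableSpace α] {μ : Measure α} {u : α → ℝ}

theorem MpNorm_one_eq :
    MpNorm μ 1 u = ⨆ (t : ℝ) (_ : 0 < t), ENNReal.ofReal t * μ {x | t < |u x|} := by
  simp [MpNorm]

theorem measure_lt_abs_le_MpNorm_one_div {t : ℝ} (ht : 0 < t) :
    μ {x | t < |u x|} ≤ MpNorm μ 1 u / ENNReal.ofReal t := by
  rw [ENNReal.le_div_iff_mul_le (.inl (ENNReal.ofReal_pos.mpr ht).ne') (.inl ofReal_ne_top),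
    mul_comm, MpNorm_one_eq]
  exact le_iSup₂ (f := fun (t : ℝ) (_ : 0 < t) => ENNReal.ofReal t * μ {x | t < |u x|}) t ht

theorem measure_lt_abs_eq_zero_of_eLpNorm_top_le {t : ℝ} (ht₀ : 0 ≤ t)
    (ht : eLpNorm u ⊤ μ ≤ ENNReal.ofReal t) : μ {x | t < |u x|} = 0 := by
  refine measure_mono_null (fun x (hx : t < |u x|) => ?_) (meas_eLpNormEssSup_lt (f := u))
  show eLpNormEssSup u μ < ‖u x‖ₑ
  rw [← eLpNorm_exponent_top, Real.enorm_eq_ofReal_abs]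
  exact ht.trans_lt ((ENNReal.ofReal_lt_ofReal_iff (ht₀.trans_lt hx)).mpr hx)

theorem MpNorm_one_le_eLpNorm_top_mul_measure_univ :
    MpNorm μ 1 u ≤ eLpNorm u ⊤ μ * μ univ := by
  rw [MpNorm_one_eq]
  refine iSup₂_le fun t ht => ?_
  by_cases hc : ENNReal.ofReal t ≤ eLpNorm u ⊤ μ
  · exact mul_le_mul' hc (measure_mono (subset_univ _))
  · rw [measure_lt_abs_eq_zero_of_eLpNorm_top_le ht.le (not_le.mp hc).le, mul_zero]
    exact zero_le

theorem eLpNorm_one_eq_lintegral_measure_lt_abs (hu : AEMeasurable u μ) :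
    eLpNorm u 1 μ = ∫⁻ t in Ioi 0, μ {x | t < |u x|} := by
  rw [eLpNorm_one_eq_lintegral_enorm, ← lintegral_eq_lintegral_meas_lt μ
    (Filter.Eventually.of_forall fun x => abs_nonneg (u x)) hu.abs]
  simp_rw [Real.enorm_eq_ofReal_abs]

end WeakNorm

theorem statement1_general {N : ℕ} (Ω : Set (Euc N)) (hΩfin : volume Ω < ⊤)
    (u : Euc N → ℝ) (hu : Measurable u)
    (hbdd : MemLp u ⊤ (volume.restrict Ω)) :
    eLpNorm u 1 (volume.restrict Ω) ≤
      ENNReal.ofReal ((MpNorm (volume.restrict Ω) 1 u).toReal *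
        (1 + Real.log ((eLpNorm u ⊤ (volume.restrict Ω)).toReal /
              (MpNorm (volume.restrict Ω) 1 u).toReal *
            (volume Ω).toReal))) := by
  set μ := volume.restrict Ω
  have hμ : μ univ = volume Ω := Measure.restrict_apply_univ Ω
  have hL : eLpNorm u ⊤ μ ≠ ⊤ := hbdd.eLpNorm_ne_top
  have hMLV : MpNorm μ 1 u ≤ eLpNorm u ⊤ μ * volume Ω :=
    hμ ▸ MpNorm_one_le_eLpNorm_top_mul_measure_univ
  have hM : MpNorm μ 1 u ≠ ⊤ := ne_top_of_le_ne_top (mul_ne_top hL hΩfin.ne) hMLV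
  rw [eLpNorm_one_eq_lintegral_measure_lt_abs hu.aemeasurable]
  refine lintegral_Ioi_zero_le_mul_one_add_log toReal_nonneg toReal_nonneg ?_ (fun t => ?_)
    (fun t ht => ?_) (fun t ht => ?_)
  · rw [← toReal_mul]
    exact toReal_mono (mul_ne_top hL hΩfin.ne) hMLV
  · rw [ofReal_toReal hΩfin.ne, ← hμ]
    exact measure_mono (subset_univ _)
  · rw [ENNReal.ofReal_div_of_pos ht, ofReal_toReal hM]
    exact measure_lt_abs_le_MpNorm_one_div ht
  · refine measure_lt_abs_eq_zero_of_eLpNorm_top_le (toReal_nonneg.trans ht.le) ?_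
    rw [← ofReal_toReal hL]
    exact ENNReal.ofReal_le_ofReal ht.le

/-- Interpolation between `M^1` and `L^∞`:
if `Ω ⊆ ℝ^N` is open with finite measure and `u : Ω → [0,∞)` is measurable and
essentially bounded, then
`‖u‖_{L^1(Ω)} ≤ |||u|||_{M^1(Ω)} [1 + log(‖u‖_{L^∞(Ω)}/|||u|||_{M^1(Ω)} · 𝓛(Ω))]`. -/
theorem statement1 {N : ℕ} (Ω : Set (Euc N)) (hΩopen : IsOpen Ω) (hΩfin : volume Ω < ⊤)
    (u : Euc N → ℝ) (hu : Measurable u) (hpos : ∀ x, 0 ≤ u x)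
    (hbdd : MemLp u ⊤ (volume.restrict Ω)) :
    eLpNorm u 1 (volume.restrict Ω) ≤
      ENNReal.ofReal ((MpNorm (volume.restrict Ω) 1 u).toReal *
        (1 + Real.log ((eLpNorm u ⊤ (volume.restrict Ω)).toReal /
              (MpNorm (volume.restrict Ω) 1 u).toReal *
            (volume Ω).toReal))) :=
  statement1_general Ω hΩfin u hu hbdd
end
end

section
/- Let Ω ⊆ ℝ^N be open and let {φ_i}_{i∈I} ⊂ L^1(Ω) be a family bounded in L^1(Ω). Then {φ_i} is equi-integrable if and only if for every ε > 0 there exist a constant C_ε and a Borel set A_ε ⊂ Ω of finite Lebesgue measure such that every φ_i can be written φ_i = φ_i^1 + φ_i^2 with ‖φ_i^1‖_{L^1(Ω)} ≤ ε, spt(φ_i^2) ⊆ A_ε, and ‖φ_i^2‖_{L^2(Ω)} ≤ C_ε, for all i ∈ I. -/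
/-!
Forward direction: given `A` catching all but `ε/2` of every `∫ |φ_i|` and the `δ` of uniform
absolute continuity for `ε/2`, split each `φ_i` at height `K = M/δ + 1` on `A`. By Markov's
inequality the part of `A` where `|φ_i| > K` has measure at most `δ`, so the unbounded part costs
at most `ε/2` in `L¹`, while the bounded part lives on `A` and has `L²` norm at most `K |A|^{1/2}`.
Backward direction: the `L¹`-small part controls the tails, and by Cauchy–Schwarz the `L²`-bounded
part has `∫_E |φ_i²| ≤ C_ε |E|^{1/2}`, which is small on sets of small measure.
-/

open MeasureTheory Set Metric Filter Topology ENNReal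
open scoped FourierTransform RealInnerProductSpace

noncomputable section

/-- Equi-integrability of a family `{φ_i}` of functions on `Ω` (context definition):
(i) for every `ε > 0` there is a Borel `A ⊆ Ω` of finite measure with
`∫_{Ω∖A} |φ_i| ≤ ε` for all `i`; (ii) for every `ε > 0` there is `δ > 0` such that
`∫_E |φ_i| ≤ ε` for all `i`, for every Borel `E ⊆ Ω` with `𝓛^N(E) ≤ δ`. -/
def EquiIntegrableOn {N : ℕ} {ι : Type*} (Ω : Set (Euc N)) (φ : ι → Euc N → ℝ) : Prop :=
  (∀ ε : ℝ, 0 < ε → ∃ A : Set (Euc N), MeasurableSet A ∧ A ⊆ Ω ∧ volume A < ⊤ ∧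
    ∀ i, ∫ x in Ω \ A, |φ i x| ≤ ε) ∧
  (∀ ε : ℝ, 0 < ε → ∃ δ : ℝ, 0 < δ ∧ ∀ E : Set (Euc N), MeasurableSet E → E ⊆ Ω →
    volume E ≤ ENNReal.ofReal δ → ∀ i, ∫ x in E, |φ i x| ≤ ε)

section

variable {α : Type*} {A : Set α} {K : ℝ} {f : α → ℝ}

def truncOn (A : Set α) (K : ℝ) (f : α → ℝ) : α → ℝ :=
  (A ∩ {x | |f x| ≤ K}).indicator f

lemma support_truncOn_subset : Function.support (truncOn A K f) ⊆ A :=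
  support_indicator_subset.trans inter_subset_left

lemma abs_truncOn_le (hK : 0 ≤ K) (x : α) : |truncOn A K f x| ≤ A.indicator (fun _ ↦ K) x := by
  by_cases hx : x ∈ A ∩ {x | |f x| ≤ K}
  · rw [truncOn, indicator_of_mem hx, indicator_of_mem hx.1]
    exact hx.2
  · simp only [truncOn, indicator_of_notMem hx, abs_zero]
    exact indicator_nonneg (fun _ _ ↦ hK) x

lemma abs_sub_truncOn_le (x : α) :
    |f x - truncOn A K f x| ≤
      Aᶜ.indicator (fun y ↦ |f y|) x + (A ∩ {y | K < |f y|}).indicator (fun y ↦ |f y|) x := by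
  by_cases hA : x ∈ A <;> by_cases hK : |f x| ≤ K
  all_goals simp [truncOn, hA, hK]
  rw [indicator_of_mem (show x ∈ A ∩ {y | K < |f y|} from ⟨hA, lt_of_not_ge hK⟩)]

variable [MeasurableSpace α] {μ : Measure α}

lemma eLpNorm_truncOn_le {p : ℝ≥0∞} (hA : MeasurableSet A) (hK : 0 ≤ K) (hp0 : p ≠ 0)
    (hptop : p ≠ ∞) :
    eLpNorm (truncOn A K f) p μ ≤ ENNReal.ofReal K * μ A ^ (1 / p.toReal) := by
  calc eLpNorm (truncOn A K f) p μ ≤ eLpNorm (A.indicator fun _ ↦ K) p μ :=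
        eLpNorm_mono fun x ↦ by
          simpa only [Real.norm_eq_abs, abs_of_nonneg (indicator_nonneg (fun _ _ ↦ hK) x)]
            using abs_truncOn_le hK x
    _ = ENNReal.ofReal K * μ A ^ (1 / p.toReal) := by
        rw [eLpNorm_indicator_const hA hp0 hptop, Real.enorm_eq_ofReal hK]

variable {Ω : Set α} {δ : ℝ}

lemma measure_inter_lt_abs_le (hfi : IntegrableOn f Ω μ) (hAΩ : A ⊆ Ω) (hK : 0 < K)
    (hKδ : ∫ x in Ω, |f x| ∂μ ≤ K * δ) : μ (A ∩ {x | K < |f x|}) ≤ ENNReal.ofReal δ := by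
  have hfin : μ.restrict Ω {x | K ≤ |f x|} ≠ ∞ := by
    simpa only [Real.norm_eq_abs] using (hfi.measure_norm_ge_lt_top hK).ne
  have hMarkov : (μ.restrict Ω {x | K ≤ |f x|}).toReal ≤ δ := le_of_mul_le_mul_left
    ((mul_meas_ge_le_integral_of_nonneg (ae_of_all _ fun _ ↦ abs_nonneg _) hfi.abs K).trans hKδ)
    hK
  calc μ (A ∩ {x | K < |f x|}) = μ.restrict Ω (A ∩ {x | K < |f x|}) :=
        (Measure.restrict_eq_self μ (inter_subset_left.trans hAΩ)).symm
    _ ≤ μ.restrict Ω {x | K ≤ |f x|} := measure_mono fun _ hx ↦ show K ≤ _ from le_of_lt hx.2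
    _ ≤ ENNReal.ofReal δ :=
        (ENNReal.le_ofReal_iff_toReal_le hfin (ENNReal.toReal_nonneg.trans hMarkov)).mpr hMarkov

lemma integral_abs_sub_truncOn_le (hf : Measurable f) (hfi : IntegrableOn f Ω μ)
    (hA : MeasurableSet A) (hAΩ : A ⊆ Ω) :
    ∫ x in Ω, |f x - truncOn A K f x| ∂μ ≤
      ∫ x in Ω \ A, |f x| ∂μ + ∫ x in A ∩ {x | K < |f x|}, |f x| ∂μ := by
  have hT : MeasurableSet (A ∩ {x | K < |f x|}) :=
    hA.inter (measurableSet_lt measurable_const hf.abs)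
  have hΩT : Ω ∩ (A ∩ {x | K < |f x|}) = A ∩ {x | K < |f x|} :=
    inter_eq_right.mpr (inter_subset_left.trans hAΩ)
  calc ∫ x in Ω, |f x - truncOn A K f x| ∂μ
      ≤ ∫ x in Ω, (Aᶜ.indicator (fun y ↦ |f y|) x +
          (A ∩ {y | K < |f y|}).indicator (fun y ↦ |f y|) x) ∂μ :=
        integral_mono_of_nonneg (ae_of_all _ fun _ ↦ abs_nonneg _)
          ((hfi.abs.indicator hA.compl).add (hfi.abs.indicator hT))
          (ae_of_all _ fun x ↦ abs_sub_truncOn_le x)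
    _ = ∫ x in Ω \ A, |f x| ∂μ + ∫ x in A ∩ {x | K < |f x|}, |f x| ∂μ := by
        rw [integral_add (hfi.abs.indicator hA.compl) (hfi.abs.indicator hT),
          setIntegral_indicator hA.compl, setIntegral_indicator hT, hΩT, sdiff_eq]

/-- The truncation is applied to a measurable representative `g` of `f`, so that the set
`{K < |g|}` is measurable; the remainder `f - truncOn A K g` keeps the splitting of `f` exact. -/
lemma exists_decomposition_of_integral_abs_le {p : ℝ≥0∞} {ε : ℝ} (hfi : IntegrableOn f Ω μ)
    (hA : MeasurableSet A) (hAΩ : A ⊆ Ω) (hK : 0 < K) (hKδ : ∫ x in Ω, |f x| ∂μ ≤ K * δ)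
    (hsmall : ∀ E, MeasurableSet E → E ⊆ Ω → μ E ≤ ENNReal.ofReal δ → ∫ x in E, |f x| ∂μ ≤ ε)
    (hp0 : p ≠ 0) (hptop : p ≠ ∞) :
    ∃ f₁ f₂ : α → ℝ, (∀ x, f x = f₁ x + f₂ x) ∧ IntegrableOn f₁ Ω μ ∧
      ∫ x in Ω, |f₁ x| ∂μ ≤ ∫ x in Ω \ A, |f x| ∂μ + ε ∧ Function.support f₂ ⊆ A ∧
      eLpNorm f₂ p (μ.restrict Ω) ≤ ENNReal.ofReal K * μ A ^ (1 / p.toReal) := by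
  set g := hfi.aestronglyMeasurable.mk f
  have hg : Measurable g := hfi.aestronglyMeasurable.stronglyMeasurable_mk.measurable
  have hfg : f =ᵐ[μ.restrict Ω] g := hfi.aestronglyMeasurable.ae_eq_mk
  have hgi : IntegrableOn g Ω μ := hfi.congr hfg
  have hgf : ∀ s ⊆ Ω, ∫ x in s, |g x| ∂μ = ∫ x in s, |f x| ∂μ := fun s hs ↦
    integral_congr_ae <|
      (ae_restrict_of_ae_restrict_of_subset hs hfg).mono fun x hx ↦ by simp only [hx]
  have hT : MeasurableSet (A ∩ {x | K < |g x|}) :=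
    hA.inter (measurableSet_lt measurable_const hg.abs)
  have hTδ : μ (A ∩ {x | K < |g x|}) ≤ ENNReal.ofReal δ :=
    measure_inter_lt_abs_le hgi hAΩ hK ((hgf Ω subset_rfl).trans_le hKδ)
  have htrunc : IntegrableOn (truncOn A K g) Ω μ :=
    hgi.indicator (hA.inter (measurableSet_le hg.abs measurable_const))
  refine ⟨fun x ↦ f x - truncOn A K g x, truncOn A K g, fun x ↦ by ring, hfi.sub htrunc, ?_,
    support_truncOn_subset, ?_⟩
  · calc ∫ x in Ω, |f x - truncOn A K g x| ∂μ = ∫ x in Ω, |g x - truncOn A K g x| ∂μ :=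
          integral_congr_ae (hfg.mono fun x hx ↦ by simp only [hx])
      _ ≤ ∫ x in Ω \ A, |g x| ∂μ + ∫ x in A ∩ {x | K < |g x|}, |g x| ∂μ :=
          integral_abs_sub_truncOn_le hg hgi hA hAΩ
      _ ≤ ∫ x in Ω \ A, |f x| ∂μ + ε := by
          have hTΩ : A ∩ {x | K < |g x|} ⊆ Ω := inter_subset_left.trans hAΩ
          rw [hgf _ sdiff_subset, hgf _ hTΩ]
          exact add_le_add le_rfl (hsmall _ hT hTΩ hTδ)
  · rw [← Measure.restrict_eq_self μ hAΩ]
    exact eLpNorm_truncOn_le hA hK.le hp0 hptop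

lemma setIntegral_diff_abs_le_of_support_subset {g h : α → ℝ} (hA : MeasurableSet A)
    (hg : IntegrableOn g Ω μ) (hfgh : ∀ x, f x = g x + h x) (hh : Function.support h ⊆ A) :
    ∫ x in Ω \ A, |f x| ∂μ ≤ ∫ x in Ω, |g x| ∂μ := by
  rw [sdiff_eq, ← setIntegral_indicator hA.compl]
  refine integral_mono_of_nonneg (ae_of_all _ fun x ↦ indicator_nonneg (fun _ _ ↦ abs_nonneg _) x)
    hg.abs (ae_of_all _ fun x ↦ ?_)
  by_cases hx : x ∈ A
  · simp [hx]
  · rw [indicator_of_mem hx, hfgh x, Function.notMem_support.mp fun h' ↦ hx (hh h'), add_zero]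

lemma setIntegral_abs_le_mul_sqrt_measure {E : Set α} {h : α → ℝ} {C : ℝ}
    (hh : AEStronglyMeasurable h (μ.restrict E)) (hE : μ E ≠ ∞) (hC : 0 ≤ C)
    (hhC : eLpNorm h 2 (μ.restrict E) ≤ ENNReal.ofReal C) :
    ∫ x in E, |h x| ∂μ ≤ C * √(μ E).toReal := by
  have hHolder :
      eLpNorm h 1 (μ.restrict E) ≤ eLpNorm h 2 (μ.restrict E) * μ E ^ (1 / 2 : ℝ) := by
    have := eLpNorm_le_eLpNorm_mul_rpow_measure_univ one_le_two hh
    rwa [Measure.restrict_apply_univ,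
      show 1 / (1 : ℝ≥0∞).toReal - 1 / (2 : ℝ≥0∞).toReal = 1 / 2 by norm_num] at this
  calc ∫ x in E, |h x| ∂μ = (eLpNorm h 1 (μ.restrict E)).toReal := by
        rw [eLpNorm_one_eq_lintegral_enorm, ← integral_norm_eq_lintegral_enorm hh]
        rfl
    _ ≤ (ENNReal.ofReal C * μ E ^ (1 / 2 : ℝ)).toReal :=
        ENNReal.toReal_mono (by finiteness) (hHolder.trans (by gcongr))
    _ = C * √(μ E).toReal := by
        rw [ENNReal.toReal_mul, ENNReal.toReal_ofReal hC, ← ENNReal.toReal_rpow,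
          Real.sqrt_eq_rpow]

lemma setIntegral_abs_le_add_mul_sqrt_measure {E : Set α} {g h : α → ℝ} {C : ℝ}
    (hf : IntegrableOn f Ω μ) (hg : IntegrableOn g Ω μ) (hfgh : ∀ x, f x = g x + h x)
    (hEΩ : E ⊆ Ω) (hE : μ E ≠ ∞) (hC : 0 ≤ C)
    (hhC : eLpNorm h 2 (μ.restrict Ω) ≤ ENNReal.ofReal C) :
    ∫ x in E, |f x| ∂μ ≤ ∫ x in Ω, |g x| ∂μ + C * √(μ E).toReal := by
  have hh : IntegrableOn h Ω μ := by
    have h_eq : h = f - g := funext fun x ↦ by rw [Pi.sub_apply, hfgh x]; ring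
    exact h_eq ▸ hf.sub hg
  have hgE := hg.mono_set hEΩ
  have hhE := hh.mono_set hEΩ
  calc ∫ x in E, |f x| ∂μ ≤ ∫ x in E, (|g x| + |h x|) ∂μ :=
        integral_mono (hf.mono_set hEΩ).abs (hgE.abs.add hhE.abs) fun x ↦ by
          simpa only [hfgh x] using abs_add_le (g x) (h x)
    _ = ∫ x in E, |g x| ∂μ + ∫ x in E, |h x| ∂μ := integral_add hgE.abs hhE.abs
    _ ≤ ∫ x in Ω, |g x| ∂μ + C * √(μ E).toReal := add_le_add
        (setIntegral_mono_set hg.abs (ae_of_all _ fun _ ↦ abs_nonneg _) hEΩ.eventuallyLE)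
        (setIntegral_abs_le_mul_sqrt_measure hhE.aestronglyMeasurable hE hC
          ((eLpNorm_mono_measure h (Measure.restrict_mono hEΩ le_rfl)).trans hhC))

end

lemma exists_pos_mul_sqrt_le {C ε : ℝ} (hC : 0 ≤ C) (hε : 0 < ε) : ∃ δ > 0, C * √δ ≤ ε := by
  refine ⟨(ε / (C + 1)) ^ 2, by positivity, ?_⟩
  rw [Real.sqrt_sq (by positivity), mul_div_assoc', div_le_iff₀ (by positivity)]
  nlinarith

theorem statement9_general {N : ℕ} {ι : Type*} (Ω : Set (Euc N))
    (φ : ι → Euc N → ℝ) (hint : ∀ i, IntegrableOn (φ i) Ω)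
    (hbdd : ∃ M : ℝ, ∀ i, ∫ x in Ω, |φ i x| ≤ M) :
    EquiIntegrableOn Ω φ ↔
      ∀ ε : ℝ, 0 < ε → ∃ (Cε : ℝ) (A : Set (Euc N)), MeasurableSet A ∧ A ⊆ Ω ∧
        volume A < ⊤ ∧
        ∀ i, ∃ φ1 φ2 : Euc N → ℝ,
          (∀ x, φ i x = φ1 x + φ2 x) ∧ IntegrableOn φ1 Ω ∧
          (∫ x in Ω, |φ1 x|) ≤ ε ∧ Function.support φ2 ⊆ A ∧
          eLpNorm φ2 2 (volume.restrict Ω) ≤ ENNReal.ofReal Cε := by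
  obtain ⟨M, hM⟩ := hbdd
  constructor
  · rintro ⟨htail, hsmall⟩ ε hε
    obtain ⟨A, hA, hAΩ, hAfin, hAtail⟩ := htail (ε / 2) (half_pos hε)
    obtain ⟨δ, hδ, hδsmall⟩ := hsmall (ε / 2) (half_pos hε)
    set K := max M 0 / δ + 1
    have hK : 0 < K := by positivity
    have hKδ (i : ι) : ∫ x in Ω, |φ i x| ≤ K * δ := by
      rw [add_mul, div_mul_cancel₀ _ hδ.ne']
      linarith [hM i, le_max_left M 0]
    refine ⟨(ENNReal.ofReal K * volume A ^ (1 / (2 : ℝ≥0∞).toReal)).toReal, A, hA, hAΩ, hAfin,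
      fun i ↦ ?_⟩
    obtain ⟨φ1, φ2, hsplit, hφ1, hφ1L1, hφ2A, hφ2L2⟩ :=
      exists_decomposition_of_integral_abs_le (hint i) hA hAΩ hK (hKδ i)
        (fun E hE hEΩ hEδ ↦ hδsmall E hE hEΩ hEδ i) two_ne_zero ENNReal.ofNat_ne_top
    refine ⟨φ1, φ2, hsplit, hφ1, by linarith [hAtail i], hφ2A, ?_⟩
    rwa [ENNReal.ofReal_toReal (by finiteness)]
  · intro h
    refine ⟨fun ε hε ↦ ?_, fun ε hε ↦ ?_⟩
    · obtain ⟨_, A, hA, hAΩ, hAfin, hdec⟩ := h ε hε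
      refine ⟨A, hA, hAΩ, hAfin, fun i ↦ ?_⟩
      obtain ⟨φ1, φ2, hsplit, hφ1, hφ1L1, hφ2A, -⟩ := hdec i
      exact (setIntegral_diff_abs_le_of_support_subset hA hφ1 hsplit hφ2A).trans hφ1L1
    · obtain ⟨C, _, -, -, -, hdec⟩ := h (ε / 2) (half_pos hε)
      obtain ⟨δ, hδ, hCδ⟩ := exists_pos_mul_sqrt_le (le_max_right C 0) (half_pos hε)
      refine ⟨δ, hδ, fun E _ hEΩ hEδ i ↦ ?_⟩
      obtain ⟨φ1, φ2, hsplit, hφ1, hφ1L1, -, hφ2L2⟩ := hdec i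
      have hEfin : volume E ≠ ∞ := ne_top_of_le_ne_top ENNReal.ofReal_ne_top hEδ
      have hEδ' : (volume E).toReal ≤ δ := ENNReal.toReal_le_of_le_ofReal hδ.le hEδ
      calc ∫ x in E, |φ i x| ≤ (∫ x in Ω, |φ1 x|) + max C 0 * √(volume E).toReal :=
            setIntegral_abs_le_add_mul_sqrt_measure (hint i) hφ1 hsplit hEΩ hEfin
              (le_max_right C 0) (hφ2L2.trans (ENNReal.ofReal_le_ofReal (le_max_left C 0)))
        _ ≤ ε / 2 + max C 0 * √δ := by gcongr
        _ ≤ ε := by linarith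

/-- Characterization of equi-integrability: a family `{φ_i} ⊆ L¹(Ω)`
bounded in `L¹(Ω)` is equi-integrable iff for every `ε > 0` there are a constant `C_ε`
and a Borel set `A_ε ⊆ Ω` of finite measure such that every `φ_i` decomposes as
`φ_i = φ_i¹ + φ_i²` with `‖φ_i¹‖_{L¹(Ω)} ≤ ε`, `spt φ_i² ⊆ A_ε` and `‖φ_i²‖_{L²(Ω)} ≤ C_ε`. -/
theorem statement9 {N : ℕ} {ι : Type*} (Ω : Set (Euc N)) (hΩ : IsOpen Ω)
    (φ : ι → Euc N → ℝ) (hint : ∀ i, IntegrableOn (φ i) Ω)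
    (hbdd : ∃ M : ℝ, ∀ i, ∫ x in Ω, |φ i x| ≤ M) :
    EquiIntegrableOn Ω φ ↔
      ∀ ε : ℝ, 0 < ε → ∃ (Cε : ℝ) (A : Set (Euc N)), MeasurableSet A ∧ A ⊆ Ω ∧
        volume A < ⊤ ∧
        ∀ i, ∃ φ1 φ2 : Euc N → ℝ,
          (∀ x, φ i x = φ1 x + φ2 x) ∧ IntegrableOn φ1 Ω ∧
          (∫ x in Ω, |φ1 x|) ≤ ε ∧ Function.support φ2 ⊆ A ∧
          eLpNorm φ2 2 (volume.restrict Ω) ≤ ENNReal.ofReal Cε :=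
  statement9_general Ω φ hint hbdd
end
end
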